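/- (Summed feasibility bound, proof of Theorem 1) For every k ≥ 1: Σ_{i=1}^{k} ‖Ax^{i+1} − b‖² ≤ (2/β)·(d(λ*) − d(λ¹) + Σ_{i=1}^{k} η_i). -/

import Mathlib

/-!
By convexity of `f`, the `η`-optimality of `x⁺ = x^{i+1}` at `λ = λ^i` says that `x⁺` minimises
`L_β(·; λ⁺)` up to `η`, where `λ⁺ = λ + β r` and `r = Ax⁺ − b` (the quadratic term only helps).
Hence `d(λ⁺) ≥ f(x⁺) + g(x⁺) + ⟨λ, r⟩ + β‖r‖² − η`, while `d(λ) ≤ L_β(x⁺; λ)`, so each multiplier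
update raises the dual function by at least `β/2 ‖r‖² − η`. Telescoping and `d(λ^{k+1}) ≤ d(λ*)`
give the bound.
-/

open RealInnerProductSpace

open AffineMap in
theorem ConvexOn.add_fderiv_sub_le {E : Type*} [NormedAddCommGroup E] [NormedSpace ℝ E]
    {s : Set E} {f : E → ℝ} {f' : E →L[ℝ] ℝ} {x y : E}
    (hf : ConvexOn ℝ s f) (hx : x ∈ s) (hy : y ∈ s) (hfx : HasFDerivAt f f' x) :
    f x + f' (y - x) ≤ f y := by
  have hline := hf.comp_affineMap (lineMap x y : ℝ →ᵃ[ℝ] E)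
  have hderiv : HasDerivAt (f ∘ (lineMap x y : ℝ → E)) (f' (y - x)) 0 :=
    hfx.comp_hasDerivAt_of_eq (0 : ℝ) hasDerivAt_lineMap (lineMap_apply_zero x y).symm
  have hslope := hline.le_slope_of_hasDerivAt (by simpa) (by simpa) one_pos hderiv
  rw [slope_def_field, Function.comp_apply, Function.comp_apply, lineMap_apply_one,
    lineMap_apply_zero, sub_zero, div_one] at hslope
  linarith

theorem ConvexOn.add_inner_gradient_sub_le {F : Type*} [NormedAddCommGroup F]
    [InnerProductSpace ℝ F] [CompleteSpace F] {s : Set F} {f : F → ℝ} {f' x y : F}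
    (hf : ConvexOn ℝ s f) (hx : x ∈ s) (hy : y ∈ s) (hfx : HasGradientAt f f' x) :
    f x + ⟪f', y - x⟫ ≤ f y := by
  simpa using hf.add_fderiv_sub_le hx hy hfx.hasFDerivAt

theorem Finset.sum_Icc_le_sub_add_sum {u D e : ℕ → ℝ}
    (h : ∀ i, 1 ≤ i → u i ≤ D (i + 1) - D i + e i) (k : ℕ) :
    ∑ i ∈ Icc 1 k, u i ≤ D (k + 1) - D 1 + ∑ i ∈ Icc 1 k, e i := by
  induction k with
  | zero => simp
  | succ k ih =>
    rw [sum_Icc_succ_top (by omega), sum_Icc_succ_top (by omega)]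
    linarith [h (k + 1) (by omega)]

section AugmentedLagrangian

variable {E F : Type*} [NormedAddCommGroup E] [InnerProductSpace ℝ E] [CompleteSpace E]
  [NormedAddCommGroup F] [InnerProductSpace ℝ F] [CompleteSpace F]

noncomputable def augLagrangian (f g : E → ℝ) (A : E →L[ℝ] F) (b : F) (β : ℝ) (x : E) (lam : F) :
    ℝ :=
  f x + ⟪lam, A x - b⟫ + β / 2 * ‖A x - b‖ ^ 2 + g x

def IsApproxAugLagrangianSol (f' : E → E) (g : E → ℝ) (A : E →L[ℝ] F) (b : F) (β η : ℝ)
    (lam : F) (xp : E) : Prop :=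
  ∀ y, ⟪f' xp + A.adjoint (lam + β • (A xp - b)), xp - y⟫ + g xp - g y ≤ η

variable {f g : E → ℝ} {f' : E → E} {A : E →L[ℝ] F} {b : F} {β η : ℝ} {lam : F} {xp : E}

theorem IsApproxAugLagrangianSol.le_augLagrangian
    (h : IsApproxAugLagrangianSol f' g A b β η lam xp) (hf : ConvexOn ℝ Set.univ f)
    (hf' : HasGradientAt f (f' xp) xp) (hβ : 0 ≤ β) (y : E) :
    f xp + g xp + ⟪lam + β • (A xp - b), A xp - b⟫ - η
      ≤ augLagrangian f g A b β y (lam + β • (A xp - b)) := by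
  set μ := lam + β • (A xp - b)
  have happrox := h y
  have hconv := hf.add_inner_gradient_sub_le (Set.mem_univ xp) (Set.mem_univ y) hf'
  have hadj : ⟪A.adjoint μ, xp - y⟫ = ⟪μ, A xp - b⟫ - ⟪μ, A y - b⟫ := by
    rw [A.adjoint_inner_left, ← inner_sub_right, map_sub, sub_sub_sub_cancel_right]
  have hflip : ⟪f' xp, y - xp⟫ = -⟪f' xp, xp - y⟫ := by
    rw [← inner_neg_right, neg_sub]
  rw [inner_add_left, hadj] at happrox
  have hquad : 0 ≤ β / 2 * ‖A y - b‖ ^ 2 := by positivity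
  rw [augLagrangian]
  linarith

theorem IsApproxAugLagrangianSol.dual_ascent
    (h : IsApproxAugLagrangianSol f' g A b β η lam xp) (hf : ConvexOn ℝ Set.univ f)
    (hf' : HasGradientAt f (f' xp) xp) (hβ : 0 ≤ β) {d : F → ℝ}
    (hd : ∀ μ, IsLeast (Set.range fun x => augLagrangian f g A b β x μ) (d μ)) :
    β / 2 * ‖A xp - b‖ ^ 2 ≤ d (lam + β • (A xp - b)) - d lam + η := by
  have hd_le : d lam ≤ augLagrangian f g A b β xp lam := (hd lam).2 ⟨xp, rfl⟩
  obtain ⟨y, hy⟩ := (hd (lam + β • (A xp - b))).1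
  dsimp only at hy
  have hd_ge := h.le_augLagrangian hf hf' hβ y
  rw [hy, inner_add_left, real_inner_smul_left, real_inner_self_eq_norm_sq] at hd_ge
  rw [augLagrangian] at hd_le
  linarith

end AugmentedLagrangian

theorem ial_summed_feasibility_general
    {n m : ℕ}
    (A : EuclideanSpace ℝ (Fin n) →L[ℝ] EuclideanSpace ℝ (Fin m))
    (b : EuclideanSpace ℝ (Fin m))
    (f g : EuclideanSpace ℝ (Fin n) → ℝ)
    (f' : EuclideanSpace ℝ (Fin n) → EuclideanSpace ℝ (Fin n))
    (hf : ConvexOn ℝ Set.univ f)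
    (hf' : ∀ x, HasGradientAt f (f' x) x)
    (β : ℝ) (hβ : 0 < β)
    (L : EuclideanSpace ℝ (Fin n) → EuclideanSpace ℝ (Fin m) → ℝ)
    (hL : ∀ x lam, L x lam
        = f x + ⟪lam, A x - b⟫ + β / 2 * ‖A x - b‖ ^ 2 + g x)
    (d : EuclideanSpace ℝ (Fin m) → ℝ)
    (hd : ∀ lam, IsLeast (Set.range fun x => L x lam) (d lam))
    (x : ℕ → EuclideanSpace ℝ (Fin n))
    (lam : ℕ → EuclideanSpace ℝ (Fin m))
    (η : ℕ → ℝ)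
    (happrox : ∀ k, 1 ≤ k → ∀ y,
        ⟪f' (x (k + 1)) + A.adjoint (lam k + β • (A (x (k + 1)) - b)), x (k + 1) - y⟫
          + g (x (k + 1)) - g y ≤ η k)
    (hlam : ∀ k, 1 ≤ k → lam (k + 1) = lam k + β • (A (x (k + 1)) - b))
    (lamstar : EuclideanSpace ℝ (Fin m))
    (hstar : ∀ μ, d μ ≤ d lamstar)
    :
    ∀ k, 1 ≤ k →
      ∑ i ∈ Finset.Icc 1 k, ‖A (x (i + 1)) - b‖ ^ 2
        ≤ 2 / β * (d lamstar - d (lam 1) + ∑ i ∈ Finset.Icc 1 k, η i) := by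
  obtain rfl : L = augLagrangian f g A b β := funext fun x => funext (hL x)
  have hstep : ∀ i, 1 ≤ i →
      β / 2 * ‖A (x (i + 1)) - b‖ ^ 2 ≤ d (lam (i + 1)) - d (lam i) + η i := by
    intro i hi
    rw [hlam i hi]
    exact IsApproxAugLagrangianSol.dual_ascent (happrox i hi) hf (hf' _) hβ.le hd
  intro k _
  have hsum := Finset.sum_Icc_le_sub_add_sum (D := fun i => d (lam i)) hstep k
  rw [← Finset.mul_sum] at hsum
  calc ∑ i ∈ Finset.Icc 1 k, ‖A (x (i + 1)) - b‖ ^ 2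
      = 2 / β * (β / 2 * ∑ i ∈ Finset.Icc 1 k, ‖A (x (i + 1)) - b‖ ^ 2) := by
        field_simp
    _ ≤ 2 / β * (d lamstar - d (lam 1) + ∑ i ∈ Finset.Icc 1 k, η i) := by
        gcongr
        linarith [hstar (lam (k + 1))]

/-- **Summed feasibility bound (proof of Theorem 1).**
For every `k ≥ 1`:
`Σ_{i=1}^{k} ‖Ax^{i+1} − b‖² ≤ (2/β)(d(λ*) − d(λ¹) + Σ_{i=1}^{k} η_i)`. -/
theorem ial_summed_feasibility
    {n m : ℕ}
    (A : EuclideanSpace ℝ (Fin n) →L[ℝ] EuclideanSpace ℝ (Fin m))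
    (b : EuclideanSpace ℝ (Fin m))
    (f g : EuclideanSpace ℝ (Fin n) → ℝ)
    (f' : EuclideanSpace ℝ (Fin n) → EuclideanSpace ℝ (Fin n))
    (hf : ConvexOn ℝ Set.univ f)
    (hf' : ∀ x, HasGradientAt f (f' x) x)
    (hg : ConvexOn ℝ Set.univ g)
    (β : ℝ) (hβ : 0 < β)
    (L : EuclideanSpace ℝ (Fin n) → EuclideanSpace ℝ (Fin m) → ℝ)
    (hL : ∀ x lam, L x lam
        = f x + ⟪lam, A x - b⟫ + β / 2 * ‖A x - b‖ ^ 2 + g x)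
    (d : EuclideanSpace ℝ (Fin m) → ℝ)
    (hd : ∀ lam, IsLeast (Set.range fun x => L x lam) (d lam))
    (x : ℕ → EuclideanSpace ℝ (Fin n))
    (lam : ℕ → EuclideanSpace ℝ (Fin m))
    (η : ℕ → ℝ)
    (hη : ∀ k, 1 ≤ k → 0 ≤ η k)
    (happrox : ∀ k, 1 ≤ k → ∀ y,
        ⟪f' (x (k + 1)) + A.adjoint (lam k + β • (A (x (k + 1)) - b)), x (k + 1) - y⟫
          + g (x (k + 1)) - g y ≤ η k)
    (hlam : ∀ k, 1 ≤ k → lam (k + 1) = lam k + β • (A (x (k + 1)) - b))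
    (lamstar : EuclideanSpace ℝ (Fin m))
    (hstar : ∀ μ, d μ ≤ d lamstar)
    :
    ∀ k, 1 ≤ k →
      ∑ i ∈ Finset.Icc 1 k, ‖A (x (i + 1)) - b‖ ^ 2
        ≤ 2 / β * (d lamstar - d (lam 1) + ∑ i ∈ Finset.Icc 1 k, η i) :=
  ial_summed_feasibility_general A b f g f' hf hf' β hβ L hL d hd x lam η happrox hlam lamstar hstar
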